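/- For every integer k ≥ 1 and every integer l ≥ 0, the determinant of the 2k×2k integer matrix T defined by: T_{i,i} = 1 for 1 ≤ i ≤ 2k−1 and T_{2k,2k} = −4l; T_{i,i−1} = 1 for 2 ≤ i ≤ 2k; T_{i,2k} = −(4l+1) for every even index i with 2 ≤ i ≤ 2k−2 and T_{i,2k} = −1 for every odd index i with 1 ≤ i ≤ 2k−1; and all other entries 0, equals 1 − 4kl. In particular, this matrix is I_{2k} − Q where Q is the matrix of (D_{2k+1}E_{2k+1})^{2l}D_{2k+1}, and for l = k+1 its determinant is −4k² − 4k + 1. -/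
import Mathlib

/-- The reduced Burau matrix `σ_{i,n} ∈ Mat_{n-1}(ℤ)` of the braid generator `σ_i ∈ B_n`
evaluated at `t = -1`, for `1 ≤ i ≤ n-1` (the index `i` is 1-based, rows/columns of the
matrix are 0-based): it agrees with the identity matrix except in row `i` (1-based), where
the entry in column `i-1` is `-1` (when `i ≥ 2`), the entry in column `i` is `1`, and the
entry in column `i+1` is `1` (when `i ≤ n-2`). -/
def burauSigma (n i : ℕ) : Matrix (Fin (n - 1)) (Fin (n - 1)) ℤ :=
  Matrix.of fun a b =>
    if a.val + 1 = i then
      if b.val + 2 = i then -1 else if b.val + 1 = i then 1 else if b.val = i then 1 else 0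
    else if a = b then 1 else 0

/-- `D_n = σ_{1,n} σ_{2,n} ⋯ σ_{n-1,n}`, the reduced Burau matrix at `t = -1` of
`δ = σ_1 σ_2 ⋯ σ_{n-1} ∈ B_n`. -/
def burauD (n : ℕ) : Matrix (Fin (n - 1)) (Fin (n - 1)) ℤ :=
  ((List.range (n - 1)).map fun i => burauSigma n (i + 1)).prod

/-- `E_n = σ_{n-1,n} σ_{n-2,n} ⋯ σ_{1,n}`, the reduced Burau matrix at `t = -1` of
`δ^Δ = σ_{n-1} σ_{n-2} ⋯ σ_1 ∈ B_n`. -/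
def burauE (n : ℕ) : Matrix (Fin (n - 1)) (Fin (n - 1)) ℤ :=
  ((List.range (n - 1)).reverse.map fun i => burauSigma n (i + 1)).prod

/-- The `2k×2k` integer matrix `T` (note `2*k+1-1 = 2*k` definitionally; 1-based
description): `T_{i,i} = 1` for `1 ≤ i ≤ 2k-1` and `T_{2k,2k} = -4l`; `T_{i,i-1} = 1`
for `2 ≤ i ≤ 2k`; the last-column entry `T_{i,2k}` is `-(4l+1)` for even `i` with
`2 ≤ i ≤ 2k-2` and `-1` for odd `i` with `1 ≤ i ≤ 2k-1`; all other entries are `0`. -/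
def Tmat (k l : ℕ) : Matrix (Fin (2 * k + 1 - 1)) (Fin (2 * k + 1 - 1)) ℤ :=
  Matrix.of fun a b =>
    if b.val = 2 * k - 1 then
      (if a.val = 2 * k - 1 then -(4 * (l : ℤ))
       else if a.val % 2 = 1 then -(4 * (l : ℤ) + 1) else -1)
    else if a.val = b.val then 1 else if a.val = b.val + 1 then 1 else 0

namespace BurauAux

/-! ### Sum helpers -/

lemma sum_ite_eq0 {N : ℕ} (c : ℕ) (f : Fin N → ℤ) :
    (∑ j : Fin N, if (j : ℕ) = c then f j else 0) = if h : c < N then f ⟨c, h⟩ else 0 := by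
  by_cases h : c < N
  · rw [dif_pos h, Finset.sum_eq_single (⟨c, h⟩ : Fin N)]
    · rw [if_pos rfl]
    · intro j _ hj
      rw [if_neg (fun hc => hj (Fin.ext hc))]
    · intro hmem; exact absurd (Finset.mem_univ _) hmem
  · rw [dif_neg h]
    exact Finset.sum_eq_zero fun j _ => by rw [if_neg]; omega

lemma sum_ite_shift {N : ℕ} (c : ℕ) (f : Fin N → ℤ) :
    (∑ j : Fin N, if (j : ℕ) + 1 = c then f j else 0)
      = if h : c - 1 < N ∧ 1 ≤ c then f ⟨c - 1, h.1⟩ else 0 := by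
  by_cases h : c - 1 < N ∧ 1 ≤ c
  · rw [dif_pos h, Finset.sum_eq_single (⟨c - 1, h.1⟩ : Fin N)]
    · rw [if_pos (show c - 1 + 1 = c by omega)]
    · intro j _ hj
      rw [if_neg (fun hc => hj (Fin.ext (show (j : ℕ) = c - 1 by omega)))]
    · intro hmem; exact absurd (Finset.mem_univ _) hmem
  · rw [dif_neg h]
    refine Finset.sum_eq_zero fun j _ => by rw [if_neg]; omega

lemma neg_one_pow_mod (x : ℕ) : (-1 : ℤ) ^ x = if x % 2 = 0 then 1 else -1 := by
  rcases Nat.even_or_odd x with h | h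
  · rw [h.neg_one_pow, if_pos (Nat.even_iff.mp h)]
  · have := Nat.odd_iff.mp h
    rw [h.neg_one_pow, if_neg (by omega)]

/-! ### Multiplication by a Burau generator -/

def srow (m b : ℕ) : ℤ :=
  if b + 1 = m then -1 else if b = m then 1 else if b = m + 1 then 1 else 0

lemma sigma_apply {n : ℕ} (m : ℕ) (j b : Fin (n - 1)) :
    burauSigma n (m + 1) j b =
      (if (j : ℕ) = m then srow m (b : ℕ) else 0) +
      (if (j : ℕ) = (b : ℕ) then (if (b : ℕ) = m then 0 else 1) else 0) := by
  simp only [burauSigma, Matrix.of_apply, srow, Fin.ext_iff]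
  split_ifs <;> omega

lemma mul_sigma {n : ℕ} (m : ℕ) (hm : m < n - 1)
    (A : Matrix (Fin (n - 1)) (Fin (n - 1)) ℤ) (a b : Fin (n - 1)) :
    (A * burauSigma n (m + 1)) a b =
      A a ⟨m, hm⟩ * srow m (b : ℕ) + (if (b : ℕ) = m then 0 else A a b) := by
  rw [Matrix.mul_apply]
  have h1 : ∀ j : Fin (n - 1), A a j * burauSigma n (m + 1) j b =
      (if (j : ℕ) = m then srow m (b : ℕ) * A a j else 0) +
      (if (j : ℕ) = (b : ℕ) then (if (b : ℕ) = m then 0 else A a j) else 0) := by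
    intro j
    rw [sigma_apply]
    split_ifs <;> ring
  rw [Finset.sum_congr rfl fun j _ => h1 j, Finset.sum_add_distrib,
      sum_ite_eq0 m _, sum_ite_eq0 (b : ℕ) _, dif_pos hm, dif_pos b.isLt]
  simp [mul_comm]

lemma sigma_mul {n : ℕ} (m : ℕ) (hm : m < n - 1)
    (A : Matrix (Fin (n - 1)) (Fin (n - 1)) ℤ) (a b : Fin (n - 1)) :
    (burauSigma n (m + 1) * A) a b =
      if (a : ℕ) = m then
        ((if h : 1 ≤ m then -A ⟨m - 1, Nat.lt_of_le_of_lt (Nat.sub_le m 1) hm⟩ b else 0) + A ⟨m, hm⟩ b +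
          (if h : m + 1 < n - 1 then A ⟨m + 1, h⟩ b else 0))
      else A a b := by
  rw [Matrix.mul_apply]
  by_cases ha : (a : ℕ) = m
  · rw [if_pos ha]
    have h1 : ∀ j : Fin (n - 1), burauSigma n (m + 1) a j * A j b =
        (if (j : ℕ) + 1 = m then -A j b else 0) +
        ((if (j : ℕ) = m then A j b else 0) + (if (j : ℕ) = m + 1 then A j b else 0)) := by
      intro j
      rw [sigma_apply, if_pos ha, ha]
      simp only [srow]
      split_ifs <;> first | ring1 | (exfalso; omega)
    rw [Finset.sum_congr rfl fun j _ => h1 j, Finset.sum_add_distrib, Finset.sum_add_distrib,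
        sum_ite_shift m, sum_ite_eq0 m, sum_ite_eq0 (m + 1), dif_pos hm]
    by_cases h0 : 1 ≤ m
    · rw [dif_pos (show m - 1 < n - 1 ∧ 1 ≤ m from ⟨by omega, h0⟩), dif_pos h0]
      ring
    · rw [dif_neg (by omega), dif_neg h0]
      ring
  · rw [if_neg ha]
    have h1 : ∀ j : Fin (n - 1), burauSigma n (m + 1) a j * A j b =
        (if (j : ℕ) = (a : ℕ) then A j b else 0) := by
      intro j
      rw [sigma_apply]
      split_ifs <;> first | ring1 | (exfalso; omega)
    rw [Finset.sum_congr rfl fun j _ => h1 j, sum_ite_eq0, dif_pos a.isLt]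

/-! ### Closed forms of the partial products -/

def Dpart (k m : ℕ) : Matrix (Fin (2 * k + 1 - 1)) (Fin (2 * k + 1 - 1)) ℤ :=
  Matrix.of fun a b =>
    if (a : ℕ) < m then
      (if (b : ℕ) + 1 = (a : ℕ) then -1 else if (b : ℕ) + 1 = m then 1
       else if (b : ℕ) = m then 1 else 0)
    else if (a : ℕ) = (b : ℕ) then 1 else 0

def Epart (k m : ℕ) : Matrix (Fin (2 * k + 1 - 1)) (Fin (2 * k + 1 - 1)) ℤ :=
  Matrix.of fun a b =>
    if (a : ℕ) < m then
      (if (b : ℕ) = (a : ℕ) + 1 then 1 else if (b : ℕ) = 0 then (-1) ^ (a : ℕ) else 0)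
    else if (a : ℕ) = (b : ℕ) then 1 else 0

lemma Dpart_zero (k : ℕ) : Dpart k 0 = 1 := by
  ext a b
  simp only [Dpart, Matrix.of_apply, Matrix.one_apply, Fin.ext_iff]
  split_ifs <;> omega

lemma Epart_zero (k : ℕ) : Epart k 0 = 1 := by
  ext a b
  simp only [Epart, Matrix.of_apply, Matrix.one_apply, Fin.ext_iff]
  split_ifs <;> omega

lemma Dpart_succ (k m : ℕ) (hm : m < 2 * k + 1 - 1) :
    Dpart k m * burauSigma (2 * k + 1) (m + 1) = Dpart k (m + 1) := by
  ext a b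
  rw [mul_sigma m hm]
  have hb := b.isLt
  have haa := a.isLt
  simp only [Dpart, Matrix.of_apply, srow]
  split_ifs <;> omega

lemma Epart_succ (k m : ℕ) (hm : m < 2 * k + 1 - 1) :
    burauSigma (2 * k + 1) (m + 1) * Epart k m = Epart k (m + 1) := by
  ext a b
  rw [sigma_mul m hm]
  have hb := b.isLt
  have haa := a.isLt
  by_cases ha : (a : ℕ) = m
  · rw [if_pos ha]
    by_cases h0 : 1 ≤ m
    · rw [dif_pos h0]
      have e1 : m - 1 < m := by omega
      have e2 : m - 1 + 1 = m := by omega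
      have e3 : m < m + 1 := by omega
      have e4 : ¬ m < m := by omega
      have e5 : ¬ m + 1 < m := by omega
      by_cases h1 : m + 1 < 2 * k + 1 - 1
      · rw [dif_pos h1]
        simp only [Epart, Matrix.of_apply, Fin.val_mk, ha, neg_one_pow_mod, e1, e2, e3, e4, e5,
          if_true, if_false, eq_self_iff_true]
        split_ifs <;> omega
      · rw [dif_neg h1]
        simp only [Epart, Matrix.of_apply, Fin.val_mk, ha, neg_one_pow_mod, e1, e2, e3, e4, e5,
          if_true, if_false, eq_self_iff_true]
        split_ifs <;> omega
    · rw [dif_neg h0]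
      have h00 : m = 0 := by omega
      subst h00
      have e3 : (0 : ℕ) < 0 + 1 := by omega
      have e4 : ¬ (0 : ℕ) < 0 := by omega
      have e5 : ¬ (0 : ℕ) + 1 < 0 := by omega
      by_cases h1 : 0 + 1 < 2 * k + 1 - 1
      · rw [dif_pos h1]
        simp only [Epart, Matrix.of_apply, Fin.val_mk, ha, neg_one_pow_mod, e3, e4, e5,
          if_true, if_false, eq_self_iff_true]
        split_ifs <;> omega
      · rw [dif_neg h1]
        simp only [Epart, Matrix.of_apply, Fin.val_mk, ha, neg_one_pow_mod, e3, e4, e5,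
          if_true, if_false, eq_self_iff_true]
        split_ifs <;> omega
  · rw [if_neg ha]
    simp only [Epart, Matrix.of_apply, neg_one_pow_mod]
    split_ifs <;> omega

lemma burauD_eq (k : ℕ) : burauD (2 * k + 1) = Dpart k (2 * k + 1 - 1) := by
  unfold burauD
  have key : ∀ m, m ≤ 2 * k + 1 - 1 →
      ((List.range m).map fun i => burauSigma (2 * k + 1) (i + 1)).prod = Dpart k m := by
    intro m
    induction m with
    | zero => intro _; simpa using (Dpart_zero k).symm
    | succ s ih =>
      intro h
      rw [List.range_succ, List.map_append, List.prod_append, ih (by omega)]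
      simp only [List.map_cons, List.map_nil, List.prod_cons, List.prod_nil, mul_one]
      exact Dpart_succ k s (by omega)
  exact key _ le_rfl

lemma burauE_eq (k : ℕ) : burauE (2 * k + 1) = Epart k (2 * k + 1 - 1) := by
  unfold burauE
  have key : ∀ m, m ≤ 2 * k + 1 - 1 →
      (((List.range m).reverse).map fun i => burauSigma (2 * k + 1) (i + 1)).prod
        = Epart k m := by
    intro m
    induction m with
    | zero => intro _; simpa using (Epart_zero k).symm
    | succ s ih =>
      intro h
      rw [List.range_succ, List.reverse_append, List.reverse_singleton,
          List.singleton_append, List.map_cons, List.prod_cons, ih (by omega)]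
      exact Epart_succ k s (by omega)
  exact key _ le_rfl

/-! ### The product `D * E` and its powers -/

def Pm (k : ℕ) : Matrix (Fin (2 * k + 1 - 1)) (Fin (2 * k + 1 - 1)) ℤ :=
  Matrix.of fun a b =>
    (if (a : ℕ) = (b : ℕ) then -1 else 0) +
    (if (b : ℕ) = 0 ∧ (a : ℕ) % 2 = 1 then -2 else 0)

def Mkl (k l : ℕ) : Matrix (Fin (2 * k + 1 - 1)) (Fin (2 * k + 1 - 1)) ℤ :=
  Matrix.of fun a b => if (b : ℕ) = 0 ∧ (a : ℕ) % 2 = 1 then 4 * (l : ℤ) else 0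

lemma DE_eq (k : ℕ) (hk : 1 ≤ k) :
    Dpart k (2 * k + 1 - 1) * Epart k (2 * k + 1 - 1) = Pm k := by
  ext a b
  rw [Matrix.mul_apply]
  have haa := a.isLt
  have h1 : ∀ j : Fin (2 * k + 1 - 1),
      Dpart k (2 * k + 1 - 1) a j * Epart k (2 * k + 1 - 1) j b =
      (if (j : ℕ) + 1 = (a : ℕ) then -(Epart k (2 * k + 1 - 1) j b) else 0) +
      (if (j : ℕ) + 1 = 2 * k + 1 - 1 then Epart k (2 * k + 1 - 1) j b else 0) := by
    intro j
    have hj := j.isLt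
    conv_lhs => rw [Dpart]
    simp only [Matrix.of_apply]
    split_ifs <;> first | ring1 | (exfalso; omega)
  rw [Finset.sum_congr rfl fun j _ => h1 j, Finset.sum_add_distrib,
      sum_ite_shift (a : ℕ), sum_ite_shift (2 * k + 1 - 1),
      dif_pos (show 2 * k + 1 - 1 - 1 < 2 * k + 1 - 1 ∧ 1 ≤ 2 * k + 1 - 1 by omega)]
  have hb := b.isLt
  have f1 : 2 * k + 1 - 1 - 1 < 2 * k + 1 - 1 := by omega
  have f2 : ¬((2 * k + 1 - 1 - 1) % 2 = 0) := by omega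
  have f3 : 2 * k + 1 - 1 - 1 + 1 = 2 * k + 1 - 1 := by omega
  by_cases h0 : 1 ≤ (a : ℕ)
  · rw [dif_pos (show (a : ℕ) - 1 < 2 * k + 1 - 1 ∧ 1 ≤ (a : ℕ) from ⟨by omega, h0⟩)]
    have f4 : (a : ℕ) - 1 < 2 * k + 1 - 1 := by omega
    have f5 : (a : ℕ) - 1 + 1 = (a : ℕ) := by omega
    simp only [Epart, Pm, Matrix.of_apply, neg_one_pow_mod, Fin.val_mk, f1, f2, f3, f4, f5,
      if_true, if_false, iff_false, eq_self_iff_true]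
    split_ifs <;> (try omega)
  · rw [dif_neg (by omega)]
    simp only [Epart, Pm, Matrix.of_apply, neg_one_pow_mod, Fin.val_mk, f1, f2, f3,
      if_true, if_false, iff_false, eq_self_iff_true]
    split_ifs <;> (try omega)

lemma Pm_sq (k : ℕ) (hk : 1 ≤ k) : Pm k * Pm k = 1 + Mkl k 1 := by
  ext a b
  rw [Matrix.mul_apply]
  have h1 : ∀ j : Fin (2 * k + 1 - 1), Pm k a j * Pm k j b =
      (if (j : ℕ) = (a : ℕ) then -(Pm k j b) else 0) +
      (if (j : ℕ) = 0 then (if (a : ℕ) % 2 = 1 then -2 else 0) * Pm k j b else 0) := by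
    intro j
    have e : Pm k a j = (if (j : ℕ) = (a : ℕ) then (-1 : ℤ) else 0) +
        (if (j : ℕ) = 0 then (if (a : ℕ) % 2 = 1 then -2 else 0) else 0) := by
      simp only [Pm, Matrix.of_apply]
      split_ifs <;> omega
    rw [e]
    split_ifs <;> ring
  rw [Finset.sum_congr rfl fun j _ => h1 j, Finset.sum_add_distrib,
      sum_ite_eq0 (a : ℕ), sum_ite_eq0 0, dif_pos a.isLt, dif_pos (show 0 < 2 * k + 1 - 1 by omega)]
  simp only [Pm, Mkl, Matrix.add_apply, Matrix.one_apply, Matrix.of_apply, Fin.ext_iff,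
    Fin.val_mk, and_false, false_and, if_false]
  split_ifs <;> first | omega | (exfalso; omega) | tauto | norm_num

lemma Mkl_mul_Mkl (k l l' : ℕ) : Mkl k l * Mkl k l' = 0 := by
  ext a b
  rw [Matrix.mul_apply, Matrix.zero_apply]
  refine Finset.sum_eq_zero fun j _ => ?_
  simp only [Mkl, Matrix.of_apply]
  split_ifs <;> first | ring1 | (exfalso; omega)

lemma Pm_pow (k : ℕ) (hk : 1 ≤ k) (l : ℕ) : Pm k ^ (2 * l) = 1 + Mkl k l := by
  induction l with
  | zero =>
    ext a b
    simp [Mkl, Matrix.one_apply]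
  | succ s ih =>
    have h2 : Pm k ^ 2 = 1 + Mkl k 1 := by rw [sq]; exact Pm_sq k hk
    rw [show 2 * (s + 1) = 2 * s + 2 by ring, pow_add, ih, h2, add_mul, one_mul, mul_add,
        mul_one, Mkl_mul_Mkl, add_zero]
    ext a b
    simp only [Matrix.add_apply, Matrix.one_apply, Mkl, Matrix.of_apply]
    split_ifs <;> push_cast <;> omega

lemma Tmat_eq_formula (k l : ℕ) (hk : 1 ≤ k) :
    Tmat k l = 1 - (1 + Mkl k l) * Dpart k (2 * k + 1 - 1) := by
  ext a b
  rw [Matrix.sub_apply, Matrix.mul_apply]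
  have haa := a.isLt
  have hb := b.isLt
  have h1 : ∀ j : Fin (2 * k + 1 - 1),
      (1 + Mkl k l) a j * Dpart k (2 * k + 1 - 1) j b =
      (if (j : ℕ) = (a : ℕ) then Dpart k (2 * k + 1 - 1) j b else 0) +
      (if (j : ℕ) = 0 then
        (if (a : ℕ) % 2 = 1 then 4 * (l : ℤ) else 0) * Dpart k (2 * k + 1 - 1) j b else 0) := by
    intro j
    simp only [Matrix.add_apply, Matrix.one_apply, Mkl, Matrix.of_apply, Fin.ext_iff]
    split_ifs <;> first | ring1 | (exfalso; omega)
  rw [Finset.sum_congr rfl fun j _ => h1 j, Finset.sum_add_distrib,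
      sum_ite_eq0 (a : ℕ), sum_ite_eq0 0, dif_pos a.isLt, dif_pos (show 0 < 2 * k + 1 - 1 by omega)]
  have g1 : (a : ℕ) < 2 * k + 1 - 1 := haa
  have g3 : ¬((b : ℕ) = 2 * k + 1 - 1) := by omega
  have g4 : ¬((b : ℕ) + 1 = 0) := by omega
  simp only [Tmat, Dpart, Matrix.of_apply, Matrix.one_apply, Fin.ext_iff, Fin.eta, Fin.val_mk,
    g1, g3, g4, if_true, if_false, eq_self_iff_true, and_false, false_and]
  split_ifs <;> omega

/-! ### LU decomposition of `Tmat` -/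

def uval (l a : ℕ) : ℤ :=
  if a % 2 = 0 then 4 * (l : ℤ) * ((a / 2 : ℕ) : ℤ) - 1
  else -(4 * (l : ℤ) * ((a / 2 : ℕ) : ℤ) + 4 * (l : ℤ))

def Lmat (k l : ℕ) : Matrix (Fin (2 * k + 1 - 1)) (Fin (2 * k + 1 - 1)) ℤ :=
  Matrix.of fun a b =>
    if (b : ℕ) = 2 * k - 1 then (if (a : ℕ) = 2 * k - 1 then 1 - 4 * (k : ℤ) * l else 0)
    else if (a : ℕ) = (b : ℕ) then 1 else if (a : ℕ) = (b : ℕ) + 1 then 1 else 0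

def Umat (k l : ℕ) : Matrix (Fin (2 * k + 1 - 1)) (Fin (2 * k + 1 - 1)) ℤ :=
  Matrix.of fun a b =>
    if (b : ℕ) = 2 * k - 1 ∧ (a : ℕ) ≠ 2 * k - 1 then uval l (a : ℕ)
    else if (a : ℕ) = (b : ℕ) then 1 else 0

lemma uval_two_mul (l t : ℕ) : uval l (2 * t) = 4 * (l : ℤ) * t - 1 := by
  have h2 : (2 * t) / 2 = t := by omega
  rw [uval, if_pos (by omega), h2]

lemma uval_two_mul_add_one (l t : ℕ) : uval l (2 * t + 1) = -(4 * (l : ℤ) * (t + 1)) := by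
  have h2 : (2 * t + 1) / 2 = t := by omega
  rw [uval, if_neg (by omega), h2]
  ring

lemma LU_decomp (k l : ℕ) (hk : 1 ≤ k) : Tmat k l = Lmat k l * Umat k l := by
  ext a b
  rw [Matrix.mul_apply]
  have haa := a.isLt
  have hb := b.isLt
  by_cases hbb : (b : ℕ) = 2 * k - 1
  · have h1 : ∀ j : Fin (2 * k + 1 - 1), Lmat k l a j * Umat k l j b =
        (if (j : ℕ) = (a : ℕ) then (if (a : ℕ) = 2 * k - 1 then 0 else uval l (j : ℕ)) else 0) +
        (if (j : ℕ) + 1 = (a : ℕ) then uval l (j : ℕ) else 0) +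
        (if (j : ℕ) = 2 * k - 1 then
          (if (a : ℕ) = 2 * k - 1 then 1 - 4 * (k : ℤ) * (l : ℤ) else 0) else 0) := by
      intro j
      have hj := j.isLt
      have eU : Umat k l j b = if (j : ℕ) = 2 * k - 1 then 1 else uval l (j : ℕ) := by
        simp only [Umat, Matrix.of_apply]
        split_ifs <;> first | rfl | (exfalso; omega)
      rw [eU]
      simp only [Lmat, Matrix.of_apply]
      split_ifs <;> first | ring1 | (exfalso; omega)
    rw [Finset.sum_congr rfl fun j _ => h1 j, Finset.sum_add_distrib, Finset.sum_add_distrib,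
        sum_ite_eq0 (a : ℕ), sum_ite_shift (a : ℕ), sum_ite_eq0 (2 * k - 1),
        dif_pos a.isLt, dif_pos (show 2 * k - 1 < 2 * k + 1 - 1 by omega)]
    simp only [Fin.val_mk]
    by_cases ha1 : (a : ℕ) = 2 * k - 1
    · rw [if_pos ha1, if_pos ha1,
          dif_pos (show (a : ℕ) - 1 < 2 * k + 1 - 1 ∧ 1 ≤ (a : ℕ) by omega),
          show (a : ℕ) - 1 = 2 * (k - 1) from by omega, uval_two_mul]
      simp only [Tmat, Matrix.of_apply, hbb, ha1, eq_self_iff_true, if_true]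
      push_cast [show ((k - 1 : ℕ) : ℤ) = (k : ℤ) - 1 by omega]
      ring
    · rw [if_neg ha1, if_neg ha1]
      by_cases ha0 : 1 ≤ (a : ℕ)
      · rw [dif_pos (show (a : ℕ) - 1 < 2 * k + 1 - 1 ∧ 1 ≤ (a : ℕ) by omega)]
        rcases Nat.even_or_odd (a : ℕ) with he | ho
        · obtain ⟨t, ht⟩ := he
          have ht' : (a : ℕ) = 2 * t := by omega
          rw [ht', show 2 * t - 1 = 2 * (t - 1) + 1 from by omega, uval_two_mul,
              uval_two_mul_add_one]
          simp only [Tmat, Matrix.of_apply, hbb, eq_self_iff_true, if_true]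
          rw [if_neg (by omega), if_neg (by omega)]
          push_cast [show ((t - 1 : ℕ) : ℤ) = (t : ℤ) - 1 by omega]
          ring
        · obtain ⟨t, ht⟩ := ho
          rw [ht, show 2 * t + 1 - 1 = 2 * t from by omega, uval_two_mul,
              uval_two_mul_add_one]
          simp only [Tmat, Matrix.of_apply, hbb, eq_self_iff_true, if_true]
          rw [if_neg (by omega), if_pos (by omega)]
          push_cast
          ring
      · have ha00 : (a : ℕ) = 0 := by omega
        rw [dif_neg (by omega), ha00, show (0 : ℕ) = 2 * 0 from rfl, uval_two_mul]
        simp only [Tmat, Matrix.of_apply, hbb, eq_self_iff_true, if_true]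
        rw [if_neg (by omega), if_neg (by omega)]
        push_cast
        ring
  · have h1 : ∀ j : Fin (2 * k + 1 - 1), Lmat k l a j * Umat k l j b =
        (if (j : ℕ) = (b : ℕ) then Lmat k l a j else 0) := by
      intro j
      have eU : Umat k l j b = if (j : ℕ) = (b : ℕ) then 1 else 0 := by
        simp only [Umat, Matrix.of_apply]
        split_ifs <;> first | rfl | (exfalso; omega)
      rw [eU]
      split_ifs <;> ring
    rw [Finset.sum_congr rfl fun j _ => h1 j, sum_ite_eq0 (b : ℕ), dif_pos b.isLt]
    simp only [Fin.eta]
    simp only [Tmat, Lmat, Matrix.of_apply]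
    split_ifs <;> omega

lemma det_L (k l : ℕ) (hk : 1 ≤ k) : (Lmat k l).det = 1 - 4 * (k : ℤ) * l := by
  have htri : (Lmat k l).BlockTriangular OrderDual.toDual := by
    intro i j hij
    have h : (i : ℕ) < (j : ℕ) := hij
    have hj := j.isLt
    simp only [Lmat, Matrix.of_apply]
    split_ifs <;> first | rfl | (exfalso; omega)
  rw [Matrix.det_of_lowerTriangular _ htri,
      Finset.prod_eq_single (⟨2 * k - 1, by omega⟩ : Fin (2 * k + 1 - 1))]
  · simp only [Lmat, Matrix.of_apply, Fin.val_mk]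
    simp
  · intro j _ hj
    have hj' : ¬((j : ℕ) = 2 * k - 1) := fun hc => hj (Fin.ext hc)
    simp only [Lmat, Matrix.of_apply]
    rw [if_neg hj']
    simp
  · intro hmem; exact absurd (Finset.mem_univ _) hmem

lemma det_U (k l : ℕ) (hk : 1 ≤ k) : (Umat k l).det = 1 := by
  have htri : (Umat k l).BlockTriangular id := by
    intro i j hij
    have h : (j : ℕ) < (i : ℕ) := hij
    have hi := i.isLt
    simp only [Umat, Matrix.of_apply]
    split_ifs <;> first | rfl | (exfalso; omega)
  rw [Matrix.det_of_upperTriangular htri]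
  refine Finset.prod_eq_one fun i _ => ?_
  simp only [Umat, Matrix.of_apply]
  rw [if_neg (fun hc => hc.2 hc.1)]
  simp

end BurauAux

open BurauAux in
/-- For every integer `k ≥ 1` and every integer `l ≥ 0`, the determinant of the `2k×2k`
matrix `T = Tmat k l` equals `1 - 4kl`. In particular, `T` is `I_{2k} - Q`, where `Q` is
the matrix `(D_{2k+1} E_{2k+1})^{2l} D_{2k+1}`, and for `l = k+1` its determinant is
`-4k² - 4k + 1`. -/
theorem det_Tmat (k l : ℕ) (hk : 1 ≤ k) :
    (Tmat k l).det = 1 - 4 * (k : ℤ) * l ∧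
    Tmat k l = 1 - (burauD (2 * k + 1) * burauE (2 * k + 1)) ^ (2 * l) *
        burauD (2 * k + 1) ∧
    (l = k + 1 → (Tmat k l).det = -4 * (k : ℤ) ^ 2 - 4 * k + 1) := by
  have hdet : (Tmat k l).det = 1 - 4 * (k : ℤ) * l := by
    rw [LU_decomp k l hk, Matrix.det_mul, det_L k l hk, det_U k l hk, mul_one]
  refine ⟨hdet, ?_, ?_⟩
  · rw [burauD_eq k, burauE_eq k, DE_eq k hk, Pm_pow k hk l]
    exact Tmat_eq_formula k l hk
  · intro hl
    rw [hdet, hl]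
    push_cast
    ring
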